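/- arXiv:math/0209301 — 4 statements merged into one kernel-verified Lean document; each statement's English description precedes it below -/
import Mathlib

section
/- Non-degenerate coefficient functions form a Zariski open subset of the affine space of all coefficient functions f : Δ → ℂ, provided this subset is nonempty. More precisely: the set of f ∈ ℂ^Δ such that dim_ℂ ℂ[K]/(z_n : n ∈ N) is finite is Zariski open in ℂ^Δ. -/
/-!
The ideal `I_f = (z_n : n ∈ N)` is generated by the degree-one elements `z_{e_i}`, so it is
homogeneous for the grading `deg m = ⟨m, degd⟩` of `ℂ[K]`, whose graded pieces are
finite-dimensional. The quotient `ℂ[K]/I_f` is finite-dimensional iff `I_f` contains every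
monomial of some degree `d > #gens`: beyond that degree every lattice point splits off a
generator of the cone, so the containment propagates to all higher degrees. In degree `d` the
containment is the surjectivity of the multiplication map `(ℂ[K]_{d-1})^r → ℂ[K]_d`,
`(b_i) ↦ Σ z_{e_i} b_i`, whose matrix has entries polynomial in `f`; it is surjective iff one
of its maximal minors does not vanish at `f`, and these minors cut out the open set.
-/

noncomputable section

/-- The semigroup ring `ℂ[K]` of the lattice points `S = K ∩ M ⊆ ℤ^r` of a cone `K`. -/
abbrev SGA (r : ℕ) (S : AddSubmonoid (Fin r → ℤ)) : Type := AddMonoidAlgebra ℂ ↥S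

/-- `S` is the set of lattice points of the rational polyhedral cone generated by the
finite set `gens`. -/
def IsConeSemigroup (r : ℕ) (S : AddSubmonoid (Fin r → ℤ))
    (gens : Finset (Fin r → ℤ)) : Prop :=
  ∀ m : Fin r → ℤ, m ∈ S ↔ ∃ c : (Fin r → ℤ) → ℚ,
    (∀ g ∈ gens, 0 ≤ c g) ∧ ∀ i, (m i : ℚ) = ∑ g ∈ gens, c g * (g i : ℚ)

/-- The element `z_n = Σ_{m ∈ Δ} f(m) (m · n) [m]` of `ℂ[K]`. -/
def zEl {r : ℕ} {S : AddSubmonoid (Fin r → ℤ)} (Δfin : Finset ↥S)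
    (f : ↥Δfin → ℂ) (n : Fin r → ℤ) : SGA r S :=
  ∑ m ∈ Δfin.attach,
    (f m * ((∑ i, ((m : ↥S) : Fin r → ℤ) i * n i : ℤ) : ℂ)) •
      AddMonoidAlgebra.single ((m : ↥S)) (1 : ℂ)

theorem Matrix.mulVec_surjective_iff_span_col_eq_top {ι κ K : Type*} [Fintype κ] [Field K]
    (M : Matrix ι κ K) :
    Function.Surjective M.mulVec ↔ Submodule.span K (Set.range M.col) = ⊤ := by
  rw [← Matrix.range_mulVecLin, LinearMap.range_eq_top, Matrix.coe_mulVecLin]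

theorem Matrix.mulVec_surjective_iff_exists_det_submatrix_ne_zero {ι κ K : Type*}
    [Fintype ι] [DecidableEq ι] [Fintype κ] [Field K] (M : Matrix ι κ K) :
    Function.Surjective M.mulVec ↔ ∃ e : ι → κ, (M.submatrix id e).det ≠ 0 := by
  rw [Matrix.mulVec_surjective_iff_span_col_eq_top]
  simp_rw [Ne, ← isUnit_iff_ne_zero, ← Matrix.isUnit_iff_isUnit_det]
  constructor
  · intro h
    obtain ⟨κ', a, -, hspan, hli⟩ := exists_linearIndependent' K M.col
    let e := (Pi.basisFun K ι).indexEquiv (Module.Basis.mk hli (by rw [hspan, h]))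
    exact ⟨a ∘ e, Matrix.linearIndependent_cols_iff_isUnit.1 (hli.comp e e.injective)⟩
  · rintro ⟨e, he⟩
    rw [← Matrix.mulVec_surjective_iff_isUnit, Matrix.mulVec_surjective_iff_span_col_eq_top] at he
    rw [eq_top_iff, ← he]
    exact Submodule.span_mono (Set.range_comp_subset_range e M.col)

theorem AddMonoidAlgebra.single_eq_smul_single_one {k G : Type*} [Semiring k] (m : G) (c : k) :
    single m c = c • single m 1 := by
  rw [smul_single', mul_one]

theorem Ideal.IsHomogeneous.linearIndependent_mkₐ {ι κ K A : Type*} [Field K] [CommRing A]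
    [Algebra K A] [DecidableEq ι] [AddMonoid ι] {𝒜 : ι → Submodule K A} [GradedAlgebra 𝒜]
    {I : Ideal A} (hI : I.IsHomogeneous 𝒜) {x : κ → A} {deg : κ → ι}
    (hdeg : Function.Injective deg) (hx : ∀ k, x k ∈ 𝒜 (deg k)) (hxI : ∀ k, x k ∉ I) :
    LinearIndependent K fun k => Ideal.Quotient.mkₐ K I (x k) := by
  rw [linearIndependent_iff']
  intro s g hsum k hk
  by_contra hgk
  have hmem : ∑ j ∈ s, g j • x j ∈ I := by
    rw [← Ideal.Quotient.eq_zero_iff_mem, ← Ideal.Quotient.mkₐ_eq_mk K, map_sum]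
    simpa only [map_smul] using hsum
  have hcomponent : (DirectSum.decompose 𝒜 (∑ j ∈ s, g j • x j) (deg k) : A) = g k • x k := by
    rw [DirectSum.decompose_sum, DFinsupp.finsetSum_apply, AddSubmonoidClass.coe_finsetSum,
      Finset.sum_eq_single_of_mem k hk fun j _ hjk =>
        DirectSum.decompose_of_mem_ne 𝒜 (Submodule.smul_mem _ _ (hx j)) (hdeg.ne hjk)]
    exact DirectSum.decompose_of_mem_same 𝒜 (Submodule.smul_mem _ _ (hx k))
  have hgx : g k • x k ∈ I := hcomponent ▸ hI (deg k) hmem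
  exact hxI k (by simpa [hgk] using Submodule.smul_of_tower_mem I (g k)⁻¹ hgx)

theorem AddMonoidAlgebra.finite_quotient_of_finite_setOf_single_one_notMem {k G : Type*}
    [Field k] [AddCommMonoid G] (I : Ideal (AddMonoidAlgebra k G))
    (h : {m | AddMonoidAlgebra.single m (1 : k) ∉ I}.Finite) :
    Module.Finite k (AddMonoidAlgebra k G ⧸ I) := by
  classical
  refine ⟨⟨h.toFinset.image fun m => Ideal.Quotient.mkₐ k I (single m 1), eq_top_iff.2 ?_⟩⟩
  rintro x -
  obtain ⟨y, rfl⟩ := Ideal.Quotient.mkₐ_surjective k I x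
  induction y using AddMonoidAlgebra.induction_linear with
  | zero => simp
  | add a b ha hb => rw [map_add]; exact add_mem ha hb
  | single m c =>
    rw [single_eq_smul_single_one, map_smul]
    refine Submodule.smul_mem _ _ ?_
    by_cases hm : single m 1 ∈ I
    · rw [Ideal.Quotient.mkₐ_eq_mk, Ideal.Quotient.eq_zero_iff_mem.2 hm]
      exact zero_mem _
    · exact Submodule.subset_span (by simpa using ⟨m, hm, rfl⟩)

namespace GorensteinCone

variable {r : ℕ} {S : AddSubmonoid (Fin r → ℤ)} {gens : Finset (Fin r → ℤ)} {degd : Fin r → ℤ}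
  {Δfin : Finset S}

open AddMonoidAlgebra (single)

def deg (degd : Fin r → ℤ) (S : AddSubmonoid (Fin r → ℤ)) : S →+ ℤ where
  toFun m := ∑ i, (m : Fin r → ℤ) i * degd i
  map_zero' := by simp
  map_add' a b := by simp only [AddSubmonoid.coe_add, Pi.add_apply, add_mul, Finset.sum_add_distrib]

@[simp]
theorem deg_apply (m : S) : deg degd S m = ∑ i, (m : Fin r → ℤ) i * degd i := rfl

theorem cast_sum_mul_eq_sum_coeff (hgor : ∀ g ∈ gens, ∑ i, g i * degd i = 1)
    {m : Fin r → ℤ} {c : (Fin r → ℤ) → ℚ} (hc : ∀ i, (m i : ℚ) = ∑ g ∈ gens, c g * g i) :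
    ((∑ i, m i * degd i : ℤ) : ℚ) = ∑ g ∈ gens, c g := by
  calc ((∑ i, m i * degd i : ℤ) : ℚ)
      = ∑ g ∈ gens, c g * ((∑ i, g i * degd i : ℤ) : ℚ) := by
        push_cast
        simp_rw [hc, Finset.sum_mul, Finset.mul_sum, mul_assoc]
        exact Finset.sum_comm
    _ = ∑ g ∈ gens, c g := Finset.sum_congr rfl fun g hg => by simp [hgor g hg]

theorem deg_nonneg (hcone : IsConeSemigroup r S gens) (hgor : ∀ g ∈ gens, ∑ i, g i * degd i = 1)
    (m : S) : 0 ≤ deg degd S m := by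
  obtain ⟨c, hc0, hc⟩ := (hcone m).1 m.2
  have : (0 : ℚ) ≤ deg degd S m := by
    rw [deg_apply, cast_sum_mul_eq_sum_coeff hgor hc]
    exact Finset.sum_nonneg hc0
  exact_mod_cast this

theorem mem_of_mem_gens (hcone : IsConeSemigroup r S gens) {g : Fin r → ℤ} (hg : g ∈ gens) :
    g ∈ S :=
  (hcone g).2 ⟨Pi.single g 1, fun h _ => by rw [Pi.single_apply]; positivity,
    fun i => by simp [Pi.single_apply, hg]⟩

theorem finite_setOf_deg_eq (hcone : IsConeSemigroup r S gens)
    (hgor : ∀ g ∈ gens, ∑ i, g i * degd i = 1) (d : ℤ) :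
    {m : S | deg degd S m = d}.Finite := by
  set C : ℤ := ∑ g ∈ gens, ∑ i, |g i|
  have hC : ∀ g ∈ gens, ∀ i, |g i| ≤ C := fun g hg i =>
    (Finset.single_le_sum (fun j _ => abs_nonneg (g j)) (Finset.mem_univ i)).trans
      (Finset.single_le_sum (f := fun g => ∑ i, |g i|)
        (fun h _ => Finset.sum_nonneg fun j _ => abs_nonneg (h j)) hg)
  have hbound : ∀ m : S, deg degd S m = d → ∀ i, |(m : Fin r → ℤ) i| ≤ d * C := by
    intro m hm i
    obtain ⟨c, hc0, hc⟩ := (hcone m).1 m.2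
    have hd : (d : ℚ) = ∑ g ∈ gens, c g := by
      rw [← hm, deg_apply]; exact cast_sum_mul_eq_sum_coeff hgor hc
    have : |((m : Fin r → ℤ) i : ℚ)| ≤ d * C := by
      rw [hc i, hd, Finset.sum_mul]
      refine (Finset.abs_sum_le_sum_abs _ _).trans (Finset.sum_le_sum fun g hg => ?_)
      rw [abs_mul, abs_of_nonneg (hc0 g hg)]
      exact mul_le_mul_of_nonneg_left (by exact_mod_cast hC g hg i) (hc0 g hg)
    exact_mod_cast this
  refine ((Set.Finite.pi fun _ => Set.finite_Icc (-(d * C)) (d * C)).preimage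
    Subtype.val_injective.injOn).subset fun m hm i _ => abs_le.1 (hbound m hm i)

theorem exists_eq_add_of_card_lt_deg (hcone : IsConeSemigroup r S gens)
    (hgor : ∀ g ∈ gens, ∑ i, g i * degd i = 1) {m : S} (hm : (gens.card : ℤ) < deg degd S m) :
    ∃ g m' : S, (g : Fin r → ℤ) ∈ gens ∧ m = g + m' := by
  obtain ⟨c, hc0, hc⟩ := (hcone m).1 m.2
  obtain ⟨g, hg, hcg⟩ : ∃ g ∈ gens, 1 ≤ c g := by
    by_contra! h
    have hsum := Finset.sum_le_card_nsmul gens c 1 fun g hg => (h g hg).le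
    rw [deg_apply, ← Int.cast_lt (R := ℚ), cast_sum_mul_eq_sum_coeff hgor hc] at hm
    rw [nsmul_one] at hsum
    push_cast at hm
    linarith
  have hm' : (m : Fin r → ℤ) - g ∈ S := by
    refine (hcone _).2 ⟨c - Pi.single g 1, fun h hh => ?_, fun i => ?_⟩
    · rw [Pi.sub_apply, Pi.single_apply]
      split_ifs with h_eq
      · rw [h_eq]; linarith
      · linarith [hc0 h hh]
    · simp [hc i, sub_mul, Finset.sum_sub_distrib, Pi.single_apply, hg]
  exact ⟨⟨g, mem_of_mem_gens hcone hg⟩, ⟨_, hm'⟩, hg, Subtype.ext (by simp)⟩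

theorem zEl_eq_sum_zsmul (f : Δfin → ℂ) (n : Fin r → ℤ) :
    zEl Δfin f n = ∑ i, n i • zEl Δfin f (Pi.single i 1) := by
  simp only [zEl, Finset.smul_sum, ← Int.cast_smul_eq_zsmul ℂ, smul_smul]
  rw [Finset.sum_comm]
  refine Finset.sum_congr rfl fun m _ => ?_
  rw [← Finset.sum_smul]
  congr 1
  simp only [Int.cast_sum, Int.cast_mul, Finset.mul_sum, Pi.single_apply, mul_ite, mul_one,
    mul_zero, Finset.sum_ite_eq', Finset.mem_univ, ↓reduceIte]
  exact Finset.sum_congr rfl fun i _ => by ring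

theorem span_range_zEl (f : Δfin → ℂ) :
    Ideal.span (Set.range (zEl Δfin f)) =
      Ideal.span (Set.range fun i : Fin r => zEl Δfin f (Pi.single i 1)) := by
  refine le_antisymm (Ideal.span_le.2 ?_)
    (Ideal.span_mono (Set.range_subset_iff.2 fun i => Set.mem_range_self (Pi.single i 1)))
  rintro _ ⟨n, rfl⟩
  rw [zEl_eq_sum_zsmul]
  exact Ideal.sum_mem _ fun i _ => zsmul_mem (Ideal.subset_span (Set.mem_range_self i)) _

abbrev grading (degd : Fin r → ℤ) (S : AddSubmonoid (Fin r → ℤ)) :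
    ℤ → Submodule ℂ (SGA r S) :=
  AddMonoidAlgebra.gradeBy ℂ (deg degd S)

theorem single_mem_grading {m : S} {d : ℤ} (hm : deg degd S m = d) (c : ℂ) :
    single m c ∈ grading degd S d :=
  hm ▸ AddMonoidAlgebra.single_mem_gradeBy _ m c

theorem zEl_mem_grading_one (hΔ : ∀ m : S, m ∈ Δfin ↔ ∑ i, (m : Fin r → ℤ) i * degd i = 1)
    (f : Δfin → ℂ) (n : Fin r → ℤ) : zEl Δfin f n ∈ grading degd S 1 :=
  Submodule.sum_mem _ fun m _ => Submodule.smul_mem _ _ (single_mem_grading ((hΔ m).1 m.2) 1)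

theorem isHomogeneous_span_zEl (hΔ : ∀ m : S, m ∈ Δfin ↔ ∑ i, (m : Fin r → ℤ) i * degd i = 1)
    (f : Δfin → ℂ) : (Ideal.span (Set.range (zEl Δfin f))).IsHomogeneous (grading degd S) :=
  Ideal.homogeneous_span _ _ (by rintro _ ⟨n, rfl⟩; exact ⟨1, zEl_mem_grading_one hΔ f n⟩)

theorem exists_eq_sum_mul_zEl_of_mem_grading
    (hΔ : ∀ m : S, m ∈ Δfin ↔ ∑ i, (m : Fin r → ℤ) i * degd i = 1) (f : Δfin → ℂ)
    {d : ℤ} {x : SGA r S} (hxI : x ∈ Ideal.span (Set.range (zEl Δfin f)))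
    (hx : x ∈ grading degd S d) :
    ∃ b : Fin r → SGA r S, (∀ i, b i ∈ grading degd S (d - 1)) ∧
      x = ∑ i, zEl Δfin f (Pi.single i 1) * b i := by
  rw [span_range_zEl, Ideal.mem_span_range_iff_exists_fun] at hxI
  obtain ⟨c, hc⟩ := hxI
  refine ⟨fun i => DirectSum.decompose (grading degd S) (c i) (d - 1),
    fun i => SetLike.coe_mem _, ?_⟩
  rw [← DirectSum.decompose_of_mem_same _ hx, ← hc, DirectSum.decompose_sum,
    DFinsupp.finsetSum_apply, AddSubmonoidClass.coe_finsetSum]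
  refine Finset.sum_congr rfl fun i _ => ?_
  have h := DirectSum.coe_decompose_mul_add_of_left_mem (grading degd S) (b := c i) (j := d - 1)
    (zEl_mem_grading_one hΔ f (Pi.single i 1))
  rwa [add_sub_cancel, mul_comm] at h

theorem coeff_eq_zero_of_mem_grading {d : ℤ} {x : SGA r S} (hx : x ∈ grading degd S d) {m : S}
    (hm : deg degd S m ≠ d) : x.coeff m = 0 :=
  Finsupp.notMem_support_iff.1 fun h => hm (hx m h)

section slice

variable (hcone : IsConeSemigroup r S gens) (hgor : ∀ g ∈ gens, ∑ i, g i * degd i = 1)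

def slice (d : ℤ) : Finset S :=
  (finite_setOf_deg_eq hcone hgor d).toFinset

theorem mem_slice {d : ℤ} {m : S} : m ∈ slice hcone hgor d ↔ deg degd S m = d :=
  Set.Finite.mem_toFinset _

def ofSlice {d : ℤ} (u : slice hcone hgor d → ℂ) : SGA r S :=
  ∑ m : slice hcone hgor d, single (m : S) (u m)

theorem ofSlice_mem_grading {d : ℤ} (u : slice hcone hgor d → ℂ) :
    ofSlice hcone hgor u ∈ grading degd S d :=
  Submodule.sum_mem _ fun m _ => single_mem_grading ((mem_slice hcone hgor).1 m.2) _

theorem coeff_ofSlice {d : ℤ} (u : slice hcone hgor d → ℂ) (m : slice hcone hgor d) :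
    (ofSlice hcone hgor u).coeff m = u m := by
  simp [ofSlice, AddMonoidAlgebra.coeff_sum, Finsupp.single_apply]

theorem ofSlice_coeff {d : ℤ} {x : SGA r S} (hx : x ∈ grading degd S d) :
    ofSlice hcone hgor (fun m : slice hcone hgor d => x.coeff m) = x := by
  ext n
  by_cases hn : deg degd S n = d
  · exact coeff_ofSlice hcone hgor _ ⟨n, (mem_slice hcone hgor).2 hn⟩
  · rw [coeff_eq_zero_of_mem_grading (ofSlice_mem_grading hcone hgor _) hn,
      coeff_eq_zero_of_mem_grading hx hn]

theorem ofSlice_pi_single {d : ℤ} (m : slice hcone hgor d) :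
    ofSlice hcone hgor (Pi.single m 1) = single (m : S) 1 := by
  rw [ofSlice, Finset.sum_eq_single m (fun n _ hn => by simp [hn]) (by simp)]
  simp

theorem ofSlice_mem_of_forall_single_mem {I : Ideal (SGA r S)} {d : ℤ}
    (h : ∀ m : slice hcone hgor d, single (m : S) 1 ∈ I)
    (u : slice hcone hgor d → ℂ) : ofSlice hcone hgor u ∈ I := by
  refine Ideal.sum_mem _ fun m _ => ?_
  rw [AddMonoidAlgebra.single_eq_smul_single_one]
  exact Submodule.smul_of_tower_mem _ _ (h m)

/-- The matrix, in the monomial bases, of `(b_i)_i ↦ Σ_i z_{e_i} b_i` from `(ℂ[K]_{d-1})^r` to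
`ℂ[K]_d`, with entries polynomial in the coefficients `f`. -/
def mulMatrix (Δfin : Finset S) (d : ℤ) :
    Matrix (slice hcone hgor d) (Fin r × slice hcone hgor (d - 1)) (MvPolynomial Δfin ℂ) :=
  Matrix.of fun n q => ∑ m ∈ Δfin.attach,
    if (m : S) + q.2 = n then
      MvPolynomial.C (((m : S) : Fin r → ℤ) q.1 : ℂ) * MvPolynomial.X m
    else 0

theorem eval_mulMatrix (f : Δfin → ℂ) {d : ℤ} (n : slice hcone hgor d)
    (q : Fin r × slice hcone hgor (d - 1)) :
    MvPolynomial.eval f (mulMatrix hcone hgor Δfin d n q) =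
      (zEl Δfin f (Pi.single q.1 1) * single (q.2 : S) 1).coeff n := by
  rw [mulMatrix, Matrix.of_apply, map_sum, zEl, Finset.sum_mul, AddMonoidAlgebra.coeff_sum,
    Finsupp.finsetSum_apply]
  refine Finset.sum_congr rfl fun m _ => ?_
  rw [smul_mul_assoc, AddMonoidAlgebra.single_mul_single, one_mul,
    AddMonoidAlgebra.coeff_smul_apply, AddMonoidAlgebra.coeff_single, Finsupp.single_apply]
  split_ifs <;> simp [Pi.single_apply, mul_comm]

theorem mulVec_map_eval_mulMatrix (f : Δfin → ℂ) {d : ℤ}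
    (v : Fin r × slice hcone hgor (d - 1) → ℂ) :
    ((mulMatrix hcone hgor Δfin d).map (MvPolynomial.eval f)).mulVec v =
      fun n : slice hcone hgor d =>
        (∑ i, zEl Δfin f (Pi.single i 1) * ofSlice hcone hgor (fun m => v (i, m))).coeff n := by
  ext n
  simp only [Matrix.mulVec, dotProduct, Matrix.map_apply, eval_mulMatrix, Fintype.sum_prod_type,
    ofSlice, Finset.mul_sum, AddMonoidAlgebra.coeff_sum, Finsupp.finsetSum_apply]
  refine Finset.sum_congr rfl fun i _ => Finset.sum_congr rfl fun m _ => ?_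
  rw [AddMonoidAlgebra.single_eq_smul_single_one (m : S) (v (i, m)), mul_smul_comm,
    AddMonoidAlgebra.coeff_smul_apply, smul_eq_mul, mul_comm]

theorem exists_mulVec_eq_iff (hΔ : ∀ m : S, m ∈ Δfin ↔ ∑ i, (m : Fin r → ℤ) i * degd i = 1)
    (f : Δfin → ℂ) {d : ℤ} (u : slice hcone hgor d → ℂ) :
    (∃ v, ((mulMatrix hcone hgor Δfin d).map (MvPolynomial.eval f)).mulVec v = u) ↔
      ofSlice hcone hgor u ∈ Ideal.span (Set.range (zEl Δfin f)) := by
  constructor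
  · rintro ⟨v, rfl⟩
    set y := ∑ i, zEl Δfin f (Pi.single i 1) * ofSlice hcone hgor (fun m => v (i, m))
    have hy : y ∈ grading degd S d := Submodule.sum_mem _ fun i _ => by
      simpa using SetLike.mul_mem_graded (zEl_mem_grading_one hΔ f (Pi.single i 1))
        (ofSlice_mem_grading hcone hgor fun m => v (i, m))
    rw [mulVec_map_eval_mulMatrix, ofSlice_coeff hcone hgor hy]
    exact Ideal.sum_mem _ fun i _ =>
      Ideal.mul_mem_right _ _ (Ideal.subset_span (Set.mem_range_self _))
  · intro hu
    obtain ⟨b, hb, hsum⟩ :=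
      exists_eq_sum_mul_zEl_of_mem_grading hΔ f hu (ofSlice_mem_grading hcone hgor u)
    refine ⟨fun q => (b q.1).coeff q.2, ?_⟩
    rw [mulVec_map_eval_mulMatrix]
    simp_rw [ofSlice_coeff hcone hgor (hb _), ← hsum, coeff_ofSlice]

theorem mulVec_surjective_iff
    (hΔ : ∀ m : S, m ∈ Δfin ↔ ∑ i, (m : Fin r → ℤ) i * degd i = 1) (f : Δfin → ℂ) (d : ℤ) :
    Function.Surjective ((mulMatrix hcone hgor Δfin d).map (MvPolynomial.eval f)).mulVec ↔
      ∀ m : S, deg degd S m = d →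
        single m 1 ∈ Ideal.span (Set.range (zEl Δfin f)) := by
  simp_rw [Function.Surjective, exists_mulVec_eq_iff hcone hgor hΔ]
  constructor
  · intro h m hm
    simpa [ofSlice_pi_single] using h (Pi.single ⟨m, (mem_slice hcone hgor).2 hm⟩ 1)
  · exact fun h => ofSlice_mem_of_forall_single_mem hcone hgor
      fun m => h m ((mem_slice hcone hgor).1 m.2)

end slice

theorem single_mem_of_le_deg (hcone : IsConeSemigroup r S gens)
    (hgor : ∀ g ∈ gens, ∑ i, g i * degd i = 1) {I : Ideal (SGA r S)} {d : ℤ}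
    (hd : (gens.card : ℤ) < d) (h : ∀ m : S, deg degd S m = d → single m 1 ∈ I)
    {m : S} (hm : d ≤ deg degd S m) : single m 1 ∈ I := by
  suffices ∀ e, d ≤ e → ∀ m : S, deg degd S m = e → single m 1 ∈ I from
    this _ hm m rfl
  intro e he
  induction e, he using Int.leInduction with
  | base => exact h
  | succ e he ih =>
    intro m hm
    obtain ⟨g, m', hg, rfl⟩ := exists_eq_add_of_card_lt_deg hcone hgor (m := m) (by omega)
    have hm' : deg degd S m' = e := by
      have hg1 : deg degd S g = 1 := hgor _ hg
      rw [map_add, hg1] at hm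
      omega
    rw [← one_mul (1 : ℂ), ← AddMonoidAlgebra.single_mul_single]
    exact Ideal.mul_mem_left _ _ (ih m' hm')

theorem finiteDimensional_quotient_iff (hcone : IsConeSemigroup r S gens)
    (hgor : ∀ g ∈ gens, ∑ i, g i * degd i = 1) {I : Ideal (SGA r S)}
    (hI : I.IsHomogeneous (grading degd S)) :
    FiniteDimensional ℂ (SGA r S ⧸ I) ↔
      ∃ d, (gens.card : ℤ) < d ∧ ∀ m : S, deg degd S m = d → single m 1 ∈ I := by
  constructor
  · intro hfin
    set D := {d : ℤ | ∃ m : S, deg degd S m = d ∧ single m 1 ∉ I}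
    have hD : D.Finite := by
      choose m hm hmI using fun d : D => d.2
      exact Set.finite_coe_iff.1 (hI.linearIndependent_mkₐ (x := fun d => .single (m d) 1)
        Subtype.val_injective (fun d => single_mem_grading (hm d) 1) hmI).finite
    obtain ⟨d, hd, hdD⟩ := ((Set.Ioi_infinite _).sdiff hD).nonempty
    exact ⟨d, hd, fun m hm => by_contra fun hmI => hdD ⟨m, hm, hmI⟩⟩
  · rintro ⟨d, hd, h⟩
    refine AddMonoidAlgebra.finite_quotient_of_finite_setOf_single_one_notMem I
      (((Set.finite_Ico 0 d).biUnion fun e _ => finite_setOf_deg_eq hcone hgor e).subset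
        fun m hm => Set.mem_biUnion ⟨deg_nonneg hcone hgor m, ?_⟩ rfl)
    by_contra! hle
    exact hm (single_mem_of_le_deg hcone hgor hd h hle)

theorem finiteDimensional_iff_exists_mulVec_surjective (hcone : IsConeSemigroup r S gens)
    (hgor : ∀ g ∈ gens, ∑ i, g i * degd i = 1)
    (hΔ : ∀ m : S, m ∈ Δfin ↔ ∑ i, (m : Fin r → ℤ) i * degd i = 1) (f : Δfin → ℂ) :
    FiniteDimensional ℂ (SGA r S ⧸ Ideal.span (Set.range (zEl Δfin f))) ↔
      ∃ d, (gens.card : ℤ) < d ∧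
        Function.Surjective ((mulMatrix hcone hgor Δfin d).map (MvPolynomial.eval f)).mulVec := by
  simp_rw [mulVec_surjective_iff hcone hgor hΔ]
  exact finiteDimensional_quotient_iff hcone hgor (isHomogeneous_span_zEl hΔ f)

end GorensteinCone

open GorensteinCone

/-- Non-degenerate coefficient functions form a Zariski open subset of
the affine space `ℂ^Δ` of all coefficient functions `f : Δ → ℂ`: there is a collection
`P` of polynomials on `ℂ^Δ` such that `f` is non-degenerate (i.e.
`dim_ℂ ℂ[K]/(z_n : n ∈ N) < ∞`) if and only if some `p ∈ P` satisfies `p(f) ≠ 0`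
(so the non-degenerate locus is the complement of the common zero set of `P`). -/
theorem nondegenerate_is_zariski_open
    (r : ℕ) (S : AddSubmonoid (Fin r → ℤ))
    (gens : Finset (Fin r → ℤ)) (hcone : IsConeSemigroup r S gens)
    (degd : Fin r → ℤ) (hgor : ∀ g ∈ gens, ∑ i, g i * degd i = 1)
    (Δfin : Finset ↥S)
    (hΔ : ∀ m : ↥S, m ∈ Δfin ↔ ∑ i, (m : Fin r → ℤ) i * degd i = 1) :
    ∃ P : Set (MvPolynomial ↥Δfin ℂ), ∀ f : ↥Δfin → ℂ,
      FiniteDimensional ℂ (SGA r S ⧸ Ideal.span (Set.range (zEl Δfin f))) ↔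
      ∃ p ∈ P, MvPolynomial.eval f p ≠ 0 := by
  have hfd := finiteDimensional_iff_exists_mulVec_surjective hcone hgor hΔ
  have heval (d : ℤ) (e : slice hcone hgor d → Fin r × slice hcone hgor (d - 1)) (f : Δfin → ℂ) :
      MvPolynomial.eval f ((mulMatrix hcone hgor Δfin d).submatrix id e).det =
        (((mulMatrix hcone hgor Δfin d).map (MvPolynomial.eval f)).submatrix id e).det :=
    RingHom.map_det _ _
  refine ⟨{p | ∀ f, MvPolynomial.eval f p ≠ 0 →
    FiniteDimensional ℂ (SGA r S ⧸ Ideal.span (Set.range (zEl Δfin f)))},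
    fun f => ⟨fun hf => ?_, fun ⟨p, hp, hpf⟩ => hp f hpf⟩⟩
  obtain ⟨d, hd, hsurj⟩ := (hfd f).1 hf
  obtain ⟨e, he⟩ := (Matrix.mulVec_surjective_iff_exists_det_submatrix_ne_zero _).1 hsurj
  refine ⟨((mulMatrix hcone hgor Δfin d).submatrix id e).det, fun f' hf' => ?_, by rwa [heval]⟩
  rw [heval] at hf'
  exact (hfd f').2 ⟨d, hd, (Matrix.mulVec_surjective_iff_exists_det_submatrix_ne_zero _).2 ⟨e, hf'⟩⟩

end
end

section
/- For every non-degenerate coefficient function f and every n₀ ∈ N, the cohomology W(f; n₀) of the Koszul complex associated to the graded pieces z_{i,j} of the elements z_i with respect to the ·n₀ grading is finite-dimensional over ℂ. -/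
noncomputable section

/-- `I(n₀) = { m · n₀ : m ∈ Δ }`, the (finite) set of values of the auxiliary grading
`· n₀` on `Δ`. -/
def Igrades {r : ℕ} {S : AddSubmonoid (Fin r → ℤ)} (Δfin : Finset ↥S)
    (n₀ : Fin r → ℤ) : Finset ℤ :=
  Δfin.image fun m => ∑ i, m.val i * n₀ i

/-- The graded piece `z_{i,j}`, for `i ∈ {1,…,r}` and `j ∈ I(n₀)`: the `·n₀`-degree-`j`
component of `z_i = Σ_{m∈Δ} f(m)(m·n_i)[m]`, namely
`z_{i,j} = Σ_{m∈Δ, m·n₀ = j} f(m)(m·n_i)[m]`. -/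
def zGraded {r : ℕ} {S : AddSubmonoid (Fin r → ℤ)} (Δfin : Finset ↥S)
    (f : ↥Δfin → ℂ) (n₀ : Fin r → ℤ)
    (e : Fin r × ↥(Igrades Δfin n₀)) : SGA r S :=
  ∑ m ∈ Δfin.attach.filter
      (fun m => (∑ k, m.val.val k * n₀ k) = ((e.2 : ℤ))),
    (f m * ((m.val.val e.1 : ℤ) : ℂ)) •
      AddMonoidAlgebra.single ((m : ↥S)) (1 : ℂ)

/-- The (total) Koszul differential for a finite family `z : ι → A` of elements of a
commutative ring `A`, on the model `Λ(⊕_ι ℂ e_i) ⊗ A ≅ (Finset ι → A)` of the Koszul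
complex `Λ(⊕_i ⊕_{j∈I(n₀)} ℂ e_{i,j}) ⊗ ℂ[K]`, with signs determined by an injective
encoding `enc : ι → ℤ` of a linear order on `ι`:
`(d x)(s) = Σ_{e ∉ s} (−1)^{#{e' ∈ s : e' < e}} z_e · x(s ∪ {e})`. -/
def koszulD {A : Type*} [CommRing A] [Algebra ℂ A] {ι : Type*} [Fintype ι]
    [DecidableEq ι] (z : ι → A) (enc : ι → ℤ) :
    (Finset ι → A) →ₗ[ℂ] (Finset ι → A) where
  toFun x := fun s => ∑ e ∈ Finset.univ \ s,
    ((-1 : A) ^ ((s.filter (fun e' => enc e' < enc e)).card)) * (z e * x (insert e s))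
  map_add' x y := by
    funext s
    simp [mul_add, Finset.sum_add_distrib]
  map_smul' c x := by
    funext s
    simp [Finset.smul_sum, mul_smul_comm, smul_sub]

/-- The cohomology of an operator `D` (with `D ∘ D = 0`) on a module `V`:
`ker D / (im D ∩ ker D)`. -/
abbrev opCohomology {V : Type*} [AddCommGroup V] [Module ℂ V] (D : V →ₗ[ℂ] V) : Type _ :=
  ↥(LinearMap.ker D) ⧸
    Submodule.comap (LinearMap.ker D).subtype (LinearMap.range D)

/-- `W(f; n₀)`: the cohomology of the Koszul complex
`Λ(⊕_i ⊕_{j∈I(n₀)} ℂ e_{i,j}) ⊗ ℂ[K]` with differential `d = Σ_{i,j} ι(e_{i,j}) z_{i,j}`. -/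
abbrev Wcoh {r : ℕ} {S : AddSubmonoid (Fin r → ℤ)} (Δfin : Finset ↥S)
    (f : ↥Δfin → ℂ) (n₀ : Fin r → ℤ) : Type _ :=
  opCohomology (koszulD (zGraded Δfin f n₀)
    (fun e : Fin r × ↥(Igrades Δfin n₀) => (e.2 : ℤ) * r + (e.1 : ℤ)))

/-!
`ℂ[K]` is Noetherian because the lattice points of a rational polyhedral cone form a finitely
generated monoid (Gordan's lemma). The Koszul differential is `ℂ[K]`-linear, so the cohomology
is a finitely generated `ℂ[K]`-module, and each `z_{i,j}` acts on it by zero: wedging with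
`e_{i,j}` is a homotopy between multiplication by `z_{i,j}` and `0`. Hence `W(f; n₀)` is a
finitely generated module over `ℂ[K] / (z_{i,j})`, which is a quotient of the
finite-dimensional Jacobian ring `ℂ[K] / (z_i)` since `z_i = Σ_j z_{i,j}`.
-/

open Finset

section Gordan

variable {r : ℕ} {S : AddSubmonoid (Fin r → ℤ)} {gens : Finset (Fin r → ℤ)}

theorem IsConeSemigroup.mem_of_mem_gens (hS : IsConeSemigroup r S gens) {g : Fin r → ℤ}
    (hg : g ∈ gens) : g ∈ S := by
  refine (hS g).mpr ⟨fun h => if h = g then 1 else 0, fun h _ => by positivity, fun i => ?_⟩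
  rw [sum_eq_single_of_mem g hg fun h _ hne => by simp [hne]]
  simp

theorem abs_le_sum_abs_of_eq_sum_mul {m : Fin r → ℤ} {c : (Fin r → ℤ) → ℚ}
    (hc : ∀ g ∈ gens, |c g| ≤ 1) (hm : ∀ i, (m i : ℚ) = ∑ g ∈ gens, c g * g i)
    (i : Fin r) : |m i| ≤ ∑ g ∈ gens, |g i| := by
  have : |(m i : ℚ)| ≤ ∑ g ∈ gens, |(g i : ℚ)| := by
    rw [hm i]
    refine (abs_sum_le_sum_abs _ _).trans (sum_le_sum fun g hg => ?_)
    rw [abs_mul]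
    exact mul_le_of_le_one_left (abs_nonneg _) (hc g hg)
  exact_mod_cast this

def IsConeSemigroup.boxPoints (S : AddSubmonoid (Fin r → ℤ)) (gens : Finset (Fin r → ℤ)) :
    Set (Fin r → ℤ) :=
  {m | m ∈ S ∧ ∀ i, |m i| ≤ ∑ g ∈ gens, |g i|}

/-- Split the cone coefficients of `m` into integer and fractional parts: the fractional parts
give a point of the box. -/
theorem IsConeSemigroup.closure_boxPoints (hS : IsConeSemigroup r S gens) :
    AddSubmonoid.closure (boxPoints S gens) = S := by
  refine le_antisymm (AddSubmonoid.closure_le.mpr fun m hm => hm.1) fun m hm => ?_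
  obtain ⟨c, hc, hmc⟩ := (hS m).mp hm
  set m' := m - ∑ g ∈ gens, ⌊c g⌋₊ • g
  have hm' : ∀ i, (m' i : ℚ) = ∑ g ∈ gens, (c g - ⌊c g⌋₊) * g i := by
    intro i
    simp [m', hmc i, sub_mul, Finset.sum_apply]
  have hfrac : ∀ g ∈ gens, 0 ≤ c g - ⌊c g⌋₊ ∧ c g - ⌊c g⌋₊ < 1 := fun g hg =>
    ⟨sub_nonneg.mpr (Nat.floor_le (hc g hg)), by linarith [Nat.lt_floor_add_one (c g)]⟩
  have hm'box : m' ∈ boxPoints S gens :=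
    ⟨(hS m').mpr ⟨_, fun g hg => (hfrac g hg).1, hm'⟩,
      abs_le_sum_abs_of_eq_sum_mul
        (fun g hg => abs_le.mpr ⟨by linarith [(hfrac g hg).1], (hfrac g hg).2.le⟩) hm'⟩
  have hgbox : ∀ g ∈ gens, g ∈ boxPoints S gens := fun g hg =>
    ⟨hS.mem_of_mem_gens hg, fun i => single_le_sum (f := fun h => |h i|)
      (fun _ _ => abs_nonneg _) hg⟩
  rw [show m = m' + ∑ g ∈ gens, ⌊c g⌋₊ • g by simp [m']]
  exact add_mem (AddSubmonoid.subset_closure hm'box) (sum_mem fun g hg =>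
    nsmul_mem (AddSubmonoid.subset_closure (hgbox g hg)) _)

/-- Gordan's lemma. -/
theorem IsConeSemigroup.fg (hS : IsConeSemigroup r S gens) : AddMonoid.FG S := by
  refine (AddMonoid.fg_iff_addSubmonoid_fg S).mpr
    ((AddSubmonoid.fg_iff S).mpr ⟨_, hS.closure_boxPoints, ?_⟩)
  refine (Set.finite_Icc (fun i => -∑ g ∈ gens, |g i|) fun i => ∑ g ∈ gens, |g i|).subset ?_
  intro m hm
  exact ⟨fun i => neg_le_of_abs_le (hm.2 i), fun i => le_of_abs_le (hm.2 i)⟩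

end Gordan

theorem Module.finite_of_isTorsionBySet {A M : Type*} [CommRing A] [Algebra ℂ A]
    [AddCommGroup M] [Module A M] [Module ℂ M] [IsScalarTower ℂ A M] [Module.Finite A M]
    (I : Ideal A) [Module.Finite ℂ (A ⧸ I)] (hM : Module.IsTorsionBySet A M I) :
    Module.Finite ℂ M := by
  let _ := hM.module
  have : Module.Finite (A ⧸ I) M := Module.Finite.of_restrictScalars_finite A _ _
  exact Module.Finite.trans (A ⧸ I) M

theorem finiteDimensional_opCohomology_restrictScalars {A V : Type*} [CommRing A]
    [Algebra ℂ A] [IsNoetherianRing A] [AddCommGroup V] [Module A V] [Module ℂ V]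
    [IsScalarTower ℂ A V] [Module.Finite A V] (D : V →ₗ[A] V) (I : Ideal A)
    [FiniteDimensional ℂ (A ⧸ I)] (hI : I ≤ (LinearMap.range D).colon (LinearMap.ker D)) :
    FiniteDimensional ℂ (opCohomology (D.restrictScalars ℂ)) := by
  set H := LinearMap.ker D ⧸ (LinearMap.range D).comap (LinearMap.ker D).subtype
  have hH : Module.IsTorsionBySet A H I := by
    intro x a
    induction x using Submodule.Quotient.induction_on with | _ v => ?_
    rw [← Submodule.Quotient.mk_smul, Submodule.Quotient.mk_eq_zero]
    exact Submodule.mem_colon.mp (hI a.2) v v.2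
  have : Module.Finite ℂ H := Module.finite_of_isTorsionBySet I hH
  exact Module.Finite.equiv (Submodule.Quotient.restrictScalarsEquiv ℂ
    ((LinearMap.range D).comap (LinearMap.ker D).subtype)).symm

theorem neg_one_pow_mul_neg_one_pow_self {R : Type*} [Monoid R] [HasDistribNeg R] (n : ℕ) :
    (-1 : R) ^ n * (-1) ^ n = 1 := by
  rw [← pow_add, Even.neg_one_pow ⟨n, rfl⟩]

section Koszul

variable {A : Type*} [CommRing A] [Algebra ℂ A] {ι : Type*} [Fintype ι] [DecidableEq ι]

theorem koszulD_apply (z : ι → A) (enc : ι → ℤ) (x : Finset ι → A) (s : Finset ι) :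
    koszulD z enc x s =
      ∑ u ∈ univ \ s, (-1) ^ #{a ∈ s | enc a < enc u} * (z u * x (insert u s)) :=
  rfl

def koszulDLinear (z : ι → A) (enc : ι → ℤ) :
    (Finset ι → A) →ₗ[A] (Finset ι → A) where
  toFun := koszulD z enc
  map_add' := map_add _
  map_smul' a x := by
    funext s
    simp only [koszulD_apply, Pi.smul_apply, smul_eq_mul, RingHom.id_apply, mul_sum]
    exact sum_congr rfl fun _ _ => by ring

theorem koszulDLinear_restrictScalars (z : ι → A) (enc : ι → ℤ) :
    (koszulDLinear z enc).restrictScalars ℂ = koszulD z enc :=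
  rfl

/-- Exterior multiplication by the basis vector `e`. -/
def koszulWedge (enc : ι → ℤ) (e : ι) (x : Finset ι → A) : Finset ι → A :=
  fun s => if e ∈ s then (-1) ^ #{a ∈ s | enc a < enc e} * x (s.erase e) else 0

omit [Fintype ι] in
theorem card_filter_insert_self (enc : ι → ℤ) (t : Finset ι) (e : ι) :
    #{a ∈ insert e t | enc a < enc e} = #{a ∈ t | enc a < enc e} := by
  rw [filter_insert, if_neg (lt_irrefl _)]

omit [Fintype ι] in
theorem card_filter_insert_of_notMem (enc : ι → ℤ) {t : Finset ι} {v : ι} (hv : v ∉ t)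
    (w : ι) :
    #{a ∈ insert v t | enc a < enc w} =
      #{a ∈ t | enc a < enc w} + if enc v < enc w then 1 else 0 := by
  rw [filter_insert]
  split_ifs
  · exact card_insert_of_notMem fun h => hv (mem_of_mem_filter v h)
  · rfl

omit [Fintype ι] in
theorem card_filter_insert_add_card_filter_insert (enc : ι → ℤ)
    (hinj : Function.Injective enc) {t : Finset ι} {e u : ι} (he : e ∉ t) (hu : u ∉ t)
    (hne : u ≠ e) :
    #{a ∈ insert e t | enc a < enc u} + #{a ∈ insert u t | enc a < enc e} =
      #{a ∈ t | enc a < enc u} + #{a ∈ t | enc a < enc e} + 1 := by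
  rw [card_filter_insert_of_notMem enc he, card_filter_insert_of_notMem enc hu]
  rcases lt_or_gt_of_ne (hinj.ne hne) with h | h
  · rw [if_neg (lt_asymm h), if_pos h]; ring
  · rw [if_pos h, if_neg (lt_asymm h)]; ring

theorem koszul_homotopy_apply_of_notMem (z : ι → A) (enc : ι → ℤ) {e : ι}
    (x : Finset ι → A) {s : Finset ι} (he : e ∉ s) :
    koszulD z enc (koszulWedge enc e x) s +
        koszulWedge enc e (koszulD z enc x) s = z e * x s := by
  rw [koszulD_apply, koszulWedge, if_neg he, add_zero,
    sum_eq_single_of_mem e (by simpa using he)]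
  · rw [koszulWedge, if_pos (mem_insert_self e s), erase_insert he,
      card_filter_insert_self]
    linear_combination (z e * x s) *
      neg_one_pow_mul_neg_one_pow_self (R := A) #{a ∈ s | enc a < enc e}
  · intro u _ hue
    have : e ∉ insert u s := by simp [he, Ne.symm hue]
    rw [koszulWedge, if_neg this, mul_zero, mul_zero]

theorem koszul_homotopy_apply_insert (z : ι → A) (enc : ι → ℤ)
    (hinj : Function.Injective enc) {e : ι} (x : Finset ι → A) {t : Finset ι} (he : e ∉ t) :
    koszulD z enc (koszulWedge enc e x) (insert e t) +
        koszulWedge enc e (koszulD z enc x) (insert e t) = z e * x (insert e t) := by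
  set σ : Finset ι → ι → A := fun s u => (-1) ^ #{a ∈ s | enc a < enc u}
  set rest := ∑ u ∈ univ \ insert e t, σ t u * (z u * x (insert u t))
  have hwedge : koszulWedge enc e (koszulD z enc x) (insert e t) =
      σ t e * (σ t e * (z e * x (insert e t))) + σ t e * rest := by
    have hsplit : univ \ t = insert e (univ \ insert e t) := by
      ext u; by_cases u = e <;> simp_all
    rw [koszulWedge, if_pos (mem_insert_self e t), erase_insert he,
      card_filter_insert_self, koszulD_apply, hsplit, sum_insert (by simp), mul_add]
  have hD : koszulD z enc (koszulWedge enc e x) (insert e t) = -(σ t e * rest) := by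
    rw [koszulD_apply, mul_sum, ← sum_neg_distrib]
    refine sum_congr rfl fun u hu => ?_
    have hut : u ∉ insert e t := (mem_sdiff.mp hu).2
    have hue : u ≠ e := fun h => hut (h ▸ mem_insert_self e t)
    have hsign : σ (insert e t) u * σ (insert u t) e = -(σ t u * σ t e) := by
      simp only [σ]
      rw [← pow_add, ← pow_add, card_filter_insert_add_card_filter_insert enc hinj he
        (fun h => hut (mem_insert_of_mem h)) hue, pow_succ]
      ring
    rw [koszulWedge, if_pos (by simp), insert_comm,
      erase_insert (by simp [he, Ne.symm hue]), card_filter_insert_self]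
    linear_combination (z u * x (insert u t)) * hsign
  rw [hwedge, hD]
  linear_combination (z e * x (insert e t)) *
    neg_one_pow_mul_neg_one_pow_self (R := A) #{a ∈ t | enc a < enc e}

theorem koszul_homotopy (z : ι → A) (enc : ι → ℤ) (hinj : Function.Injective enc) (e : ι)
    (x : Finset ι → A) :
    koszulD z enc (koszulWedge enc e x) + koszulWedge enc e (koszulD z enc x) =
      z e • x := by
  funext s
  by_cases he : e ∈ s
  · rw [← insert_erase he]
    exact koszul_homotopy_apply_insert z enc hinj x (notMem_erase e s)
  · exact koszul_homotopy_apply_of_notMem z enc x he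

theorem span_range_le_colon_koszulDLinear (z : ι → A) (enc : ι → ℤ)
    (hinj : Function.Injective enc) :
    Ideal.span (Set.range z) ≤
      (LinearMap.range (koszulDLinear z enc)).colon (LinearMap.ker (koszulDLinear z enc)) := by
  rw [Ideal.span_le]
  rintro _ ⟨e, rfl⟩
  refine Submodule.mem_colon.mpr fun x hx => ⟨koszulWedge enc e x, ?_⟩
  have hx : koszulD z enc x = 0 := hx
  have h0 : koszulWedge enc e (0 : Finset ι → A) = 0 := by
    funext s; simp [koszulWedge]
  have := koszul_homotopy z enc hinj e x
  rwa [hx, h0, add_zero] at this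

theorem finiteDimensional_opCohomology_koszulD [IsNoetherianRing A] (z : ι → A)
    (enc : ι → ℤ) (hinj : Function.Injective enc)
    [FiniteDimensional ℂ (A ⧸ Ideal.span (Set.range z))] :
    FiniteDimensional ℂ (opCohomology (koszulD z enc)) := by
  rw [← koszulDLinear_restrictScalars]
  exact finiteDimensional_opCohomology_restrictScalars _ _
    (span_range_le_colon_koszulDLinear z enc hinj)

end Koszul

section Grading

variable {r : ℕ} {S : AddSubmonoid (Fin r → ℤ)} (Δfin : Finset ↥S) (f : ↥Δfin → ℂ)

theorem zEl_eq_sum_smul_zEl_single (n : Fin r → ℤ) :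
    zEl Δfin f n = ∑ i, (n i : ℂ) • zEl Δfin f (Pi.single i 1) := by
  simp only [zEl, smul_sum, smul_smul]
  rw [sum_comm]
  refine sum_congr rfl fun m _ => ?_
  rw [← sum_smul]
  congr 1
  simp [Pi.single_apply, mul_sum, mul_comm, mul_left_comm]

theorem sum_zGraded (n₀ : Fin r → ℤ) (i : Fin r) :
    ∑ j, zGraded Δfin f n₀ (i, j) = zEl Δfin f (Pi.single i 1) := by
  have hdeg : ∀ m : ↥Δfin, ∑ k, m.val.val k * n₀ k ∈ Igrades Δfin n₀ := fun m =>
    mem_image_of_mem _ m.2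
  rw [zEl, ← sum_fiberwise Δfin.attach fun m => (⟨_, hdeg m⟩ : Igrades Δfin n₀)]
  refine sum_congr rfl fun j _ => ?_
  simp [zGraded, Subtype.ext_iff, Pi.single_apply]

theorem zEl_mem_span_range_zGraded (n₀ n : Fin r → ℤ) :
    zEl Δfin f n ∈ Ideal.span (Set.range (zGraded Δfin f n₀)) := by
  rw [zEl_eq_sum_smul_zEl_single]
  refine Submodule.sum_mem _ fun i _ => Submodule.smul_of_tower_mem _ _ ?_
  rw [← sum_zGraded]
  exact Submodule.sum_mem _ fun j _ => Ideal.subset_span ⟨(i, j), rfl⟩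

end Grading

theorem injective_mul_add_fin {r : ℕ} :
    Function.Injective fun p : Fin r × ℤ => p.2 * r + p.1 := by
  rintro ⟨i₁, j₁⟩ ⟨i₂, j₂⟩ h
  have hi₁ := i₁.isLt
  have hi₂ := i₂.isLt
  simp only at h
  have hj : j₁ = j₂ := by
    rcases lt_trichotomy j₁ j₂ with hlt | heq | hgt
    · nlinarith
    · exact heq
    · nlinarith
  subst hj
  simp_all [Fin.ext_iff]

theorem W_finite_dimensional_general
    (r : ℕ) (S : AddSubmonoid (Fin r → ℤ))
    (gens : Finset (Fin r → ℤ)) (hcone : IsConeSemigroup r S gens)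
    (Δfin : Finset ↥S)
    (f : ↥Δfin → ℂ)
    (hnondeg : FiniteDimensional ℂ
      (SGA r S ⧸ Ideal.span (Set.range (zEl Δfin f))))
    (n₀ : Fin r → ℤ) :
    FiniteDimensional ℂ (Wcoh Δfin f n₀) := by
  have : AddMonoid.FG S := hcone.fg
  have : IsNoetherianRing (SGA r S) :=
    have := AddMonoidAlgebra.finiteType_of_fg ℂ S
    Algebra.FiniteType.isNoetherianRing ℂ _
  have hle :
      Ideal.span (Set.range (zEl Δfin f)) ≤ Ideal.span (Set.range (zGraded Δfin f n₀)) :=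
    Ideal.span_le.mpr <| Set.range_subset_iff.mpr <| zEl_mem_span_range_zGraded Δfin f n₀
  have : FiniteDimensional ℂ (SGA r S ⧸ Ideal.span (Set.range (zGraded Δfin f n₀))) :=
    Module.Finite.of_surjective (Ideal.Quotient.factorₐ ℂ hle).toLinearMap
      (Ideal.Quotient.factor_surjective hle)
  have henc :
      Function.Injective fun e : Fin r × ↥(Igrades Δfin n₀) => (e.2 : ℤ) * r + e.1 :=
    injective_mul_add_fin.comp (Function.injective_id.prodMap Subtype.val_injective)
  exact finiteDimensional_opCohomology_koszulD _ _ henc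

/-- For every non-degenerate coefficient function `f` and every
`n₀ ∈ N`, the cohomology `W(f; n₀)` of the Koszul complex associated to the graded
pieces `z_{i,j}` of the elements `z_i` with respect to the `·n₀` grading is
finite-dimensional over `ℂ`. -/
theorem W_finite_dimensional
    (r : ℕ) (S : AddSubmonoid (Fin r → ℤ))
    (gens : Finset (Fin r → ℤ)) (hcone : IsConeSemigroup r S gens)
    (degd : Fin r → ℤ) (hgor : ∀ g ∈ gens, ∑ i, g i * degd i = 1)
    (Δfin : Finset ↥S)
    (hΔ : ∀ m : ↥S, m ∈ Δfin ↔ ∑ i, (m : Fin r → ℤ) i * degd i = 1)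
    (f : ↥Δfin → ℂ)
    (hnondeg : FiniteDimensional ℂ
      (SGA r S ⧸ Ideal.span (Set.range (zEl Δfin f))))
    (n₀ : Fin r → ℤ) :
    FiniteDimensional ℂ (Wcoh Δfin f n₀) :=
  W_finite_dimensional_general r S gens hcone Δfin f hnondeg n₀

end
end

section
/- Let Φ be a regular triangulation of the Gorenstein cone K given by a convexity function h: the partial semigroup ring ℂ[K]^Φ, with product [m]·[m₁] = [m+m₁] if m, m₁ lie in a common cone of Φ and 0 otherwise, is an associative commutative ring. -/
/-!
The product `[m]·[m₁]` is `[m + m₁]` exactly when `h` is additive on `(m, m₁)`, and `0`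
otherwise. By superadditivity of `h`, each bracketing of `[m]·[m₁]·[m₂]` is nonzero exactly
when `h (m + m₁ + m₂) = h m + h m₁ + h m₂`, and then both equal `[m + m₁ + m₂]`; associativity
on basis elements extends bilinearly.
-/

open scoped Classical

/-- The product of the partial semigroup ring `ℂ[K]^Φ` associated to a decomposition `Φ`
(a collection of subsets of the semigroup `S = K ∩ M`): `[m]·[m₁] = [m + m₁]` if `m, m₁`
lie in a common cone of `Φ`, and `0` otherwise, extended bilinearly. -/
noncomputable def partialMul {S : Type*} [AddCommMonoid S] (Φ : Set (Set S))
    (f g : S →₀ ℂ) : S →₀ ℂ :=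
  f.sum fun m a => g.sum fun m₁ b =>
    if ∃ C ∈ Φ, m ∈ C ∧ m₁ ∈ C then Finsupp.single (m + m₁) (a * b) else 0

def SharesCone {S : Type*} (Φ : Set (Set S)) (m m₁ : S) : Prop :=
  ∃ C ∈ Φ, m ∈ C ∧ m₁ ∈ C

lemma sharesCone_comm {S : Type*} {Φ : Set (Set S)} {m m₁ : S} :
    SharesCone Φ m m₁ ↔ SharesCone Φ m₁ m :=
  exists_congr fun _ => and_congr_right' and_comm

section
variable {S : Type*} [AddCommMonoid S] {G : Type*} [AddCommMonoid G] [PartialOrder G]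
  [IsOrderedCancelAddMonoid G] {h : S → G}

lemma map_add_eq_and_map_add_add_eq_iff (hsuper : ∀ x y, h x + h y ≤ h (x + y))
    (x y z : S) :
    h (x + y) = h x + h y ∧ h (x + y + z) = h (x + y) + h z ↔
      h (x + y + z) = h x + h y + h z := by
  refine ⟨fun ⟨hxy, hxyz⟩ => hxy ▸ hxyz, fun hxyz => ?_⟩
  have hxy : h (x + y) = h x + h y :=
    le_antisymm (le_of_add_le_add_right (hxyz ▸ hsuper (x + y) z)) (hsuper x y)
  exact ⟨hxy, hxy ▸ hxyz⟩

lemma sharesCone_add_assoc_iff {Φ : Set (Set S)} (hsuper : ∀ x y, h x + h y ≤ h (x + y))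
    (hΦ : ∀ x y, h (x + y) = h x + h y ↔ SharesCone Φ x y) (m m₁ m₂ : S) :
    SharesCone Φ m m₁ ∧ SharesCone Φ (m + m₁) m₂ ↔
      SharesCone Φ m₁ m₂ ∧ SharesCone Φ m (m₁ + m₂) := by
  simp only [← hΦ]
  have hright := map_add_eq_and_map_add_add_eq_iff hsuper m₁ m₂ m
  rw [add_comm (m₁ + m₂), add_comm (h (m₁ + m₂)), ← add_assoc, add_comm (h m₁ + h m₂),
    ← add_assoc] at hright
  rw [map_add_eq_and_map_add_add_eq_iff hsuper, ← hright, add_assoc m]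

end

section
variable {S : Type*} [AddCommMonoid S] (Φ : Set (Set S))

@[simp] lemma partialMul_zero_left (g : S →₀ ℂ) : partialMul Φ 0 g = 0 := by
  simp [partialMul]

@[simp] lemma partialMul_zero_right (f : S →₀ ℂ) : partialMul Φ f 0 = 0 := by
  simp [partialMul]

lemma partialMul_add_left (f f' g : S →₀ ℂ) :
    partialMul Φ (f + f') g = partialMul Φ f g + partialMul Φ f' g := by
  unfold partialMul
  refine Finsupp.sum_add_index' (fun m => ?_) fun m a a' => ?_
  · exact Finset.sum_eq_zero fun m₁ _ => by simp
  · rw [← Finsupp.sum_add]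
    exact Finsupp.sum_congr fun m₁ _ => by split <;> simp [add_mul]

lemma partialMul_add_right (f g g' : S →₀ ℂ) :
    partialMul Φ f (g + g') = partialMul Φ f g + partialMul Φ f g' := by
  unfold partialMul
  rw [← Finsupp.sum_add]
  refine Finsupp.sum_congr fun m _ => Finsupp.sum_add_index' (fun m₁ => ?_) fun m₁ b b' => ?_
  all_goals split <;> simp [mul_add]

lemma partialMul_single_single (m m₁ : S) (a b : ℂ) :
    partialMul Φ (Finsupp.single m a) (Finsupp.single m₁ b) =
      if SharesCone Φ m m₁ then Finsupp.single (m + m₁) (a * b) else 0 := by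
  simp [partialMul, SharesCone]

lemma partialMul_comm (f g : S →₀ ℂ) : partialMul Φ f g = partialMul Φ g f := by
  unfold partialMul
  rw [Finsupp.sum_comm]
  refine Finsupp.sum_congr fun m _ => Finsupp.sum_congr fun m₁ _ => ?_
  rw [add_comm m₁, mul_comm (f m₁)]
  exact if_congr sharesCone_comm rfl rfl

variable {Φ}

lemma partialMul_single_assoc
    (hassoc : ∀ m m₁ m₂ : S, SharesCone Φ m m₁ ∧ SharesCone Φ (m + m₁) m₂ ↔
      SharesCone Φ m₁ m₂ ∧ SharesCone Φ m (m₁ + m₂))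
    (m m₁ m₂ : S) (a b c : ℂ) :
    partialMul Φ (partialMul Φ (Finsupp.single m a) (Finsupp.single m₁ b))
        (Finsupp.single m₂ c) =
      partialMul Φ (Finsupp.single m a)
        (partialMul Φ (Finsupp.single m₁ b) (Finsupp.single m₂ c)) := by
  have hmid := hassoc m m₁ m₂
  simp only [partialMul_single_single]
  by_cases h1 : SharesCone Φ m m₁ <;> by_cases h2 : SharesCone Φ m₁ m₂ <;>
    simp only [h1, h2, true_and, false_and, ↓reduceIte, partialMul_zero_left,
      partialMul_zero_right, partialMul_single_single, add_assoc, mul_assoc] at hmid ⊢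
  · simp only [hmid]
  · simp [hmid]
  · simp [← hmid]

lemma partialMul_assoc
    (hassoc : ∀ m m₁ m₂ : S, SharesCone Φ m m₁ ∧ SharesCone Φ (m + m₁) m₂ ↔
      SharesCone Φ m₁ m₂ ∧ SharesCone Φ m (m₁ + m₂))
    (f g k : S →₀ ℂ) :
    partialMul Φ (partialMul Φ f g) k = partialMul Φ f (partialMul Φ g k) := by
  induction f using Finsupp.induction_linear with
  | zero => simp
  | add f f' hf hf' => simp only [partialMul_add_left, hf, hf']
  | single m a =>
    induction g using Finsupp.induction_linear with
    | zero => simp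
    | add g g' hg hg' => simp only [partialMul_add_left, partialMul_add_right, hg, hg']
    | single m₁ b =>
      induction k using Finsupp.induction_linear with
      | zero => simp
      | add k k' hk hk' => simp only [partialMul_add_right, hk, hk']
      | single m₂ c => exact partialMul_single_assoc hassoc m m₁ m₂ a b c

end

theorem partial_semigroup_ring_is_ring_general
    (r : ℕ) (S : AddSubmonoid (Fin r → ℤ))
    -- the regular triangulation `Φ` with its convexity function `h`:
    (Φ : Set (Set ↥S)) (h : ↥S → ℤ)
    (hsuper : ∀ x y : ↥S, h x + h y ≤ h (x + y))
    (hΦ : ∀ x y : ↥S, h (x + y) = h x + h y ↔ ∃ C ∈ Φ, x ∈ C ∧ y ∈ C) :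
    (∀ f g : ↥S →₀ ℂ, partialMul Φ f g = partialMul Φ g f) ∧
    (∀ f g k : ↥S →₀ ℂ,
      partialMul Φ (partialMul Φ f g) k = partialMul Φ f (partialMul Φ g k)) ∧
    (∀ f g k : ↥S →₀ ℂ,
      partialMul Φ (f + g) k = partialMul Φ f k + partialMul Φ g k) ∧
    (∀ f g k : ↥S →₀ ℂ,
      partialMul Φ f (g + k) = partialMul Φ f g + partialMul Φ f k) :=
  ⟨partialMul_comm Φ, partialMul_assoc (sharesCone_add_assoc_iff hsuper hΦ),
    partialMul_add_left Φ, partialMul_add_right Φ⟩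

/-- Let `K ⊆ M_ℚ` be a rational polyhedral cone with lattice semigroup
`S = K ∩ M ⊆ ℤ^r` and let `Φ` be a regular triangulation of `K`, witnessed by a convexity
function `h` (integer-valued on lattice points, superadditive, with
`h(x+y) = h(x) + h(y)` iff `x` and `y` lie in a common cone of `Φ`).  Then the partial
semigroup ring `ℂ[K]^Φ`, with product `[m]·[m₁] = [m+m₁]` if `m, m₁` lie in a common cone
of `Φ` and `0` otherwise, is an associative commutative ring: the product is commutative,
associative, and bi-additive. -/
theorem partial_semigroup_ring_is_ring
    (r : ℕ) (S : AddSubmonoid (Fin r → ℤ))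
    -- `S` consists of the lattice points of the cone generated by `gens`:
    (gens : Finset (Fin r → ℤ))
    (hS : ∀ m : Fin r → ℤ, m ∈ S ↔ ∃ c : (Fin r → ℤ) → ℚ,
      (∀ g ∈ gens, 0 ≤ c g) ∧ ∀ i, (m i : ℚ) = ∑ g ∈ gens, c g * (g i : ℚ))
    -- the regular triangulation `Φ` with its convexity function `h`:
    (Φ : Set (Set ↥S)) (h : ↥S → ℤ)
    (hsuper : ∀ x y : ↥S, h x + h y ≤ h (x + y))
    (hΦ : ∀ x y : ↥S, h (x + y) = h x + h y ↔ ∃ C ∈ Φ, x ∈ C ∧ y ∈ C) :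
    (∀ f g : ↥S →₀ ℂ, partialMul Φ f g = partialMul Φ g f) ∧
    (∀ f g k : ↥S →₀ ℂ,
      partialMul Φ (partialMul Φ f g) k = partialMul Φ f (partialMul Φ g k)) ∧
    (∀ f g k : ↥S →₀ ℂ,
      partialMul Φ (f + g) k = partialMul Φ f k + partialMul Φ g k) ∧
    (∀ f g k : ↥S →₀ ℂ,
      partialMul Φ f (g + k) = partialMul Φ f g + partialMul Φ f k) :=
  partial_semigroup_ring_is_ring_general r S Φ h hsuper hΦ
end

section
/- Degeneration of ℂ[K] to ℂ[K]^Φ: define a family of products *_q on the vector space ℂ[K∩M] by [m] *_q [m₁] = q^{h(m+m₁)−h(m)−h(m₁)} [m+m₁]. Then for every q ≠ 0 the ring (ℂ[K∩M], *_q) is isomorphic to ℂ[K] via the rescaling [m] ↦ q^{h(m)}[m], and at q = 0 the product *_0 equals the product of the partial semigroup ring ℂ[K]^Φ. -/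
/-!
Rescaling both factors multiplies `[m] *_q [m₁]` by `q^{h(m)+h(m₁)}`, and
`q^{h(m+m₁)−h(m)−h(m₁)} · q^{h(m)+h(m₁)} = q^{h(m+m₁)}` is exactly the factor by which the rescaling
multiplies `[m][m₁] = [m+m₁]`. At `q = 0` the factor `q^{h(m+m₁)−h(m)−h(m₁)}` is `1` when the
exponent, nonnegative by superadditivity of `h`, vanishes and `0` otherwise: this is the partial
product.
-/

open scoped Classical

/-- The ordinary convolution product of the semigroup ring `ℂ[K] = ℂ[S]`. -/
noncomputable def semigroupMul {S : Type*} [AddCommMonoid S] (f g : S →₀ ℂ) : S →₀ ℂ :=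
  f.sum fun m a => g.sum fun m₁ b => Finsupp.single (m + m₁) (a * b)

/-- The degenerating family of products `*_q` on the vector space `ℂ[S]`:
`[m] *_q [m₁] = q^{h(m+m₁) − h(m) − h(m₁)} [m+m₁]` (the exponent is a nonnegative
integer by superadditivity of `h`). -/
noncomputable def qMul {S : Type*} [AddCommMonoid S] (h : S → ℤ) (q : ℂ)
    (f g : S →₀ ℂ) : S →₀ ℂ :=
  f.sum fun m a => g.sum fun m₁ b =>
    Finsupp.single (m + m₁) (q ^ (h (m + m₁) - h m - h m₁).toNat * (a * b))

/-- The product of the partial semigroup ring `ℂ[K]^Φ`, the cones of `Φ` being encoded by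
the convexity function `h`: `[m]·[m₁] = [m+m₁]` if `h(m+m₁) = h(m) + h(m₁)` (i.e. iff
`m, m₁` lie in a common cone of `Φ`) and `0` otherwise. -/
noncomputable def partialMulH {S : Type*} [AddCommMonoid S] (h : S → ℤ)
    (f g : S →₀ ℂ) : S →₀ ℂ :=
  f.sum fun m a => g.sum fun m₁ b =>
    if h (m + m₁) = h m + h m₁ then Finsupp.single (m + m₁) (a * b) else 0

/-- The rescaling `[m] ↦ q^{h(m)} [m]` of `ℂ[S]` (for `q ≠ 0`). -/
noncomputable def rescale {S : Type*} [AddCommMonoid S] (h : S → ℤ) (q : ℂ)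
    (f : S →₀ ℂ) : S →₀ ℂ :=
  f.sum fun m a => Finsupp.single m (q ^ (h m) * a)

section Rescale

variable {S : Type*} [AddCommMonoid S] (h : S → ℤ)

lemma rescale_apply (q : ℂ) (f : S →₀ ℂ) (m : S) : rescale h q f m = q ^ h m * f m := by
  rw [rescale, Finsupp.sum_apply, Finsupp.sum]
  simp only [Finsupp.single_apply]
  rw [Finset.sum_ite_eq' f.support m (fun m' => q ^ h m' * f m')]
  split_ifs with hm
  · rfl
  · rw [Finsupp.notMem_support_iff.mp hm, mul_zero]

lemma rescale_single (q : ℂ) (k : S) (c : ℂ) :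
    rescale h q (Finsupp.single k c) = Finsupp.single k (q ^ h k * c) := by
  ext m
  rw [rescale_apply, Finsupp.single_apply, Finsupp.single_apply]
  split_ifs with hk
  · subst hk; rfl
  · rw [mul_zero]

lemma rescale_rescale (a b : ℂ) (f : S →₀ ℂ) :
    rescale h a (rescale h b f) = rescale h (a * b) f := by
  ext m
  simp only [rescale_apply, mul_zpow, mul_assoc]

lemma rescale_one (f : S →₀ ℂ) : rescale h 1 f = f := by
  ext m
  rw [rescale_apply, one_zpow, one_mul]

lemma rescale_bijective {q : ℂ} (hq : q ≠ 0) : Function.Bijective (rescale h q) := by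
  refine Function.bijective_iff_has_inverse.mpr ⟨rescale h q⁻¹, fun f => ?_, fun f => ?_⟩
  · rw [rescale_rescale, inv_mul_cancel₀ hq, rescale_one]
  · rw [rescale_rescale, mul_inv_cancel₀ hq, rescale_one]

noncomputable def rescaleAddMonoidHom (q : ℂ) : (S →₀ ℂ) →+ (S →₀ ℂ) where
  toFun := rescale h q
  map_zero' := by ext m; rw [rescale_apply, Finsupp.zero_apply, mul_zero]
  map_add' f g := by ext m; simp only [rescale_apply, Finsupp.add_apply, mul_add]

lemma support_rescale {q : ℂ} (hq : q ≠ 0) (f : S →₀ ℂ) :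
    (rescale h q f).support = f.support := by
  ext m
  simp [Finsupp.mem_support_iff, rescale_apply, zpow_ne_zero _ hq]

lemma sum_rescale {N : Type*} [AddCommMonoid N] {q : ℂ} (hq : q ≠ 0) (f : S →₀ ℂ)
    (φ : S → ℂ → N) : (rescale h q f).sum φ = f.sum fun m a => φ m (q ^ h m * a) := by
  rw [Finsupp.sum, Finsupp.sum, support_rescale h hq]
  exact Finset.sum_congr rfl fun m _ => by rw [rescale_apply]

end Rescale

lemma pow_toNat_sub_mul_zpow_mul_zpow {q : ℂ} (hq : q ≠ 0) {i j k : ℤ} (hijk : i + j ≤ k)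
    (a b : ℂ) : q ^ (k - i - j).toNat * ((q ^ i * a) * (q ^ j * b)) = q ^ k * (a * b) := by
  calc q ^ (k - i - j).toNat * ((q ^ i * a) * (q ^ j * b))
      = (q ^ (k - i - j) * (q ^ i * q ^ j)) * (a * b) := by
        rw [← zpow_natCast q, Int.toNat_of_nonneg (by omega)]; ring
    _ = q ^ k * (a * b) := by rw [← zpow_add₀ hq, ← zpow_add₀ hq, sub_sub, sub_add_cancel]

lemma zero_pow_toNat_sub_mul {i j k : ℤ} (hijk : i + j ≤ k) (a : ℂ) :
    (0 : ℂ) ^ (k - i - j).toNat * a = if k = i + j then a else 0 := by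
  split_ifs with hk
  · rw [show (k - i - j).toNat = 0 by omega, pow_zero, one_mul]
  · rw [zero_pow (by omega), zero_mul]

section Products

variable {S : Type*} [AddCommMonoid S] {h : S → ℤ}

lemma rescale_semigroupMul (hsuper : ∀ x y : S, h x + h y ≤ h (x + y)) {q : ℂ} (hq : q ≠ 0)
    (f g : S →₀ ℂ) :
    rescale h q (semigroupMul f g) = qMul h q (rescale h q f) (rescale h q g) := by
  change rescaleAddMonoidHom h q (semigroupMul f g) = _
  rw [semigroupMul, qMul, map_finsuppSum, sum_rescale h hq]
  refine Finsupp.sum_congr fun m _ => ?_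
  rw [map_finsuppSum, sum_rescale h hq]
  refine Finsupp.sum_congr fun m₁ _ => ?_
  rw [pow_toNat_sub_mul_zpow_mul_zpow hq (hsuper m m₁)]
  exact rescale_single h q _ _

lemma qMul_zero (hsuper : ∀ x y : S, h x + h y ≤ h (x + y)) (f g : S →₀ ℂ) :
    qMul h 0 f g = partialMulH h f g := by
  refine Finsupp.sum_congr fun m _ => Finsupp.sum_congr fun m₁ _ => ?_
  rw [zero_pow_toNat_sub_mul (hsuper m m₁)]
  split_ifs <;> simp only [Finsupp.single_zero]

end Products

theorem degeneration_to_partial_semigroup_ring_general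
    (r : ℕ) (S : AddSubmonoid (Fin r → ℤ))
    (h : ↥S → ℤ)
    (hsuper : ∀ x y : ↥S, h x + h y ≤ h (x + y)) :
    (∀ q : ℂ, q ≠ 0 →
      Function.Bijective (rescale (S := ↥S) h q) ∧
      ∀ f g : ↥S →₀ ℂ,
        rescale h q (semigroupMul f g) = qMul h q (rescale h q f) (rescale h q g)) ∧
    (∀ f g : ↥S →₀ ℂ, qMul h 0 f g = partialMulH h f g) :=
  ⟨fun _ hq => ⟨rescale_bijective h hq, rescale_semigroupMul hsuper hq⟩, qMul_zero hsuper⟩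

/-- (Degeneration of `ℂ[K]` to `ℂ[K]^Φ`.)  Let `S = K ∩ M` be the
lattice semigroup of a rational polyhedral cone `K` and let `Φ` be a regular
triangulation of `K` with convexity function `h : S → ℤ` satisfying
`h(m+m₁) ≥ h(m) + h(m₁)`, with equality iff `m, m₁` lie in a common cone of `Φ`.
Define the family of products `*_q` on `ℂ[S]` by
`[m] *_q [m₁] = q^{h(m+m₁)−h(m)−h(m₁)} [m+m₁]`.  Then for every `q ≠ 0` the ring
`(ℂ[S], *_q)` is isomorphic to the ordinary semigroup ring `ℂ[K]` via the bijective
rescaling `[m] ↦ q^{h(m)} [m]`, and at `q = 0` the product `*_0` equals the product of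
the partial semigroup ring `ℂ[K]^Φ`. -/
theorem degeneration_to_partial_semigroup_ring
    (r : ℕ) (S : AddSubmonoid (Fin r → ℤ))
    (gens : Finset (Fin r → ℤ))
    (hS : ∀ m : Fin r → ℤ, m ∈ S ↔ ∃ c : (Fin r → ℤ) → ℚ,
      (∀ g ∈ gens, 0 ≤ c g) ∧ ∀ i, (m i : ℚ) = ∑ g ∈ gens, c g * (g i : ℚ))
    (Φ : Set (Set ↥S)) (h : ↥S → ℤ)
    (hsuper : ∀ x y : ↥S, h x + h y ≤ h (x + y))
    (hΦ : ∀ x y : ↥S, h (x + y) = h x + h y ↔ ∃ C ∈ Φ, x ∈ C ∧ y ∈ C) :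
    (∀ q : ℂ, q ≠ 0 →
      Function.Bijective (rescale (S := ↥S) h q) ∧
      ∀ f g : ↥S →₀ ℂ,
        rescale h q (semigroupMul f g) = qMul h q (rescale h q f) (rescale h q g)) ∧
    (∀ f g : ↥S →₀ ℂ, qMul h 0 f g = partialMulH h f g) :=
  degeneration_to_partial_semigroup_ring_general r S h hsuper
end
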